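/- arXiv:2002.02228 — 2 statements merged into one kernel-verified Lean document; each statement's English description precedes it below -/
import Mathlib

section
/- The top-variable inference system T-Inf is sound: every application of its rules preserves satisfiability. In particular, the conclusions of the rules Res, TRes, Fact and Conden are logical consequences of their premises; Delete removes only tautologies or variants; a clause set N ∪ {C ∨ D} with C and D non-empty and variable-disjoint is satisfiable iff N ∪ {C} or N ∪ {D} is satisfiable (Split); and the separation rule Sep replaces a clause set by an equisatisfiable one. -/
/-!
Common formalization of first-order clausal logic (without equality), following
"Resolution-based query answering and rewriting for the (loosely) guarded fragment".
-/

set_option linter.unusedVariables false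

namespace QGF

/-- Symbols: function symbols, constant symbols and predicate symbols, each indexed by ℕ. -/
inductive Head : Type
  | fn : ℕ → Head
  | cn : ℕ → Head
  | pr : ℕ → Head
  deriving DecidableEq

/-- First-order terms.  A constant `c` is represented as `Term.app (Head.cn c) []`. -/
inductive Term : Type
  | var : ℕ → Term
  | app : Head → List Term → Term

namespace Term

def isVar : Term → Prop
  | var _ => True
  | _ => False

def isConst : Term → Prop
  | app (.cn _) [] => True
  | _ => False

/-- A compound term is a term that is neither a variable nor a constant. -/
def isCompound (t : Term) : Prop := ¬ t.isVar ∧ ¬ t.isConst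

/-- Occurrence of a variable in a term. -/
inductive HasVar : Term → ℕ → Prop
  | var (x : ℕ) : HasVar (var x) x
  | app {h : Head} {ts : List Term} {x : ℕ} {t : Term} :
      t ∈ ts → HasVar t x → HasVar (app h ts) x

def vars (t : Term) : Set ℕ := {x | t.HasVar x}

/-- Subterm relation. -/
inductive SubtermOf : Term → Term → Prop
  | refl (t : Term) : SubtermOf t t
  | app {s : Term} {h : Head} {ts : List Term} {t : Term} :
      t ∈ ts → SubtermOf s t → SubtermOf s (app h ts)

/-- Depth of a term: variables and constants have depth 0. -/
def depth : Term → ℕ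
  | var _ => 0
  | app _ ts => (ts.attach.map fun t => depth t.1 + 1).foldr max 0
  decreasing_by
    have := List.sizeOf_lt_of_mem t.2
    simp only [Term.app.sizeOf_spec]
    omega

/-- Applying a substitution to a term. -/
def subst (σ : ℕ → Term) : Term → Term
  | var x => σ x
  | app h ts => app h (ts.attach.map fun t => subst σ t.1)
  decreasing_by
    have := List.sizeOf_lt_of_mem t.2
    simp only [Term.app.sizeOf_spec]
    omega

def isGround (t : Term) : Prop := t.vars = ∅

/-- An argument is flat if it is a variable or a constant. -/
def flatArg (t : Term) : Prop := t.isVar ∨ t.isConst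

/-- An argument is simple if it is a variable, a constant, or a compound term all of
whose arguments are variables or constants. -/
def simpleArg : Term → Prop
  | var _ => True
  | app _ ts => ∀ u ∈ ts, flatArg u

end Term

/-- Substitutions. -/
abbrev Subst := ℕ → Term

/-- Atoms. -/
structure Atom where
  pred : ℕ
  args : List Term

namespace Atom

def subst (σ : Subst) (a : Atom) : Atom := ⟨a.pred, a.args.map (Term.subst σ)⟩

def vars (a : Atom) : Set ℕ := {x | ∃ t ∈ a.args, x ∈ t.vars}

def flat (a : Atom) : Prop := ∀ t ∈ a.args, t.flatArg

def simple (a : Atom) : Prop := ∀ t ∈ a.args, t.simpleArg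

def ground (a : Atom) : Prop := a.vars = ∅

/-- An atom `P(t₁,…,tₙ)` viewed as the term with head the predicate symbol `P`. -/
def toTerm (a : Atom) : Term := .app (.pr a.pred) a.args

end Atom

/-- Literals. -/
structure Lit where
  pos : Bool
  atom : Atom

def Lit.mkPos (a : Atom) : Lit := ⟨true, a⟩
def Lit.mkNeg (a : Atom) : Lit := ⟨false, a⟩

namespace Lit

def subst (σ : Subst) (L : Lit) : Lit := ⟨L.pos, L.atom.subst σ⟩

def vars (L : Lit) : Set ℕ := L.atom.vars

def ground (L : Lit) : Prop := L.vars = ∅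

def flat (L : Lit) : Prop := L.atom.flat

def simple (L : Lit) : Prop := L.atom.simple

/-- Occurrence of a term in a literal (as a subterm of an argument). -/
def hasTerm (L : Lit) (t : Term) : Prop := ∃ u ∈ L.atom.args, t.SubtermOf u

def hasCompound (L : Lit) : Prop := ∃ t, L.hasTerm t ∧ t.isCompound

/-- A literal is covering if every compound term occurring in it contains exactly the
variables of the literal. -/
def covering (L : Lit) : Prop := ∀ t, L.hasTerm t → t.isCompound → t.vars = L.vars

end Lit

/-- A clause is a (multi)set of literals, represented as a list, read disjunctively,
with all variables implicitly universally quantified. -/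
abbrev Clause := List Lit

namespace Clause

def subst (σ : Subst) (C : Clause) : Clause := C.map (Lit.subst σ)

def vars (C : Clause) : Set ℕ := {x | ∃ L ∈ C, x ∈ L.vars}

def ground (C : Clause) : Prop := vars C = ∅

def flat (C : Clause) : Prop := ∀ L ∈ C, L.flat

def simple (C : Clause) : Prop := ∀ L ∈ C, L.simple

def hasTerm (C : Clause) (t : Term) : Prop := ∃ L ∈ C, L.hasTerm t

/-- A clause is covering if every compound term occurring in it contains exactly the
variables of the clause. -/
def covering (C : Clause) : Prop := ∀ t, hasTerm C t → t.isCompound → t.vars = vars C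

def hasNegCompound (C : Clause) : Prop := ∃ L ∈ C, L.pos = false ∧ L.hasCompound

def hasCompound (C : Clause) : Prop := ∃ L ∈ C, L.hasCompound

/-- The predicate symbols occurring in a clause. -/
def preds (C : Clause) : Set ℕ := {p | ∃ L ∈ C, L.atom.pred = p}

/-- The depth of a clause: the maximal depth of a term occurring in it. -/
def depth (C : Clause) : ℕ :=
  (C.map fun L => (L.atom.args.map Term.depth).foldr max 0).foldr max 0

end Clause

/-- `L` is a guard of `C`:  a negative flat literal of `C` containing all variables of `C`. -/
def Lit.isGuardOf (L : Lit) (C : Clause) : Prop :=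
  L ∈ C ∧ L.pos = false ∧ L.flat ∧ L.vars = Clause.vars C

/-- Guarded clauses (Definition 3.3). -/
def Clause.guarded (C : Clause) : Prop :=
  Clause.simple C ∧ Clause.covering C ∧ (Clause.ground C ∨ ∃ L : Lit, L.isGuardOf C)

/-- `G` is a set of loose guards of `C`. -/
def Clause.looseGuardsOf (G : List Lit) (C : Clause) : Prop :=
  (∀ L ∈ G, L ∈ C ∧ L.pos = false ∧ L.flat) ∧
  (∀ x ∈ Clause.vars C, ∃ L ∈ G, x ∈ L.vars) ∧
  (∀ x ∈ Clause.vars C, ∀ y ∈ Clause.vars C, x ≠ y → ∃ L ∈ G, x ∈ L.vars ∧ y ∈ L.vars)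

/-- Loosely guarded clauses (Definition 3.3). -/
def Clause.looselyGuarded (C : Clause) : Prop :=
  Clause.simple C ∧ Clause.covering C ∧
    (Clause.ground C ∨ ∃ G : List Lit, Clause.looseGuardsOf G C)

/-- Query clauses: flat clauses containing only negative literals (Definition 3.2). -/
def Clause.query (C : Clause) : Prop := Clause.flat C ∧ ∀ L ∈ C, L.pos = false

/-! ### Semantics -/

/-- First-order interpretations. -/
structure Interp : Type 1 where
  dom : Type
  nonempty : Nonempty dom
  fn : Head → List dom → dom
  pr : ℕ → List dom → Prop

def Term.eval (I : Interp) (ν : ℕ → I.dom) : Term → I.dom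
  | .var x => ν x
  | .app h ts => I.fn h (ts.attach.map fun t => Term.eval I ν t.1)
  decreasing_by
    have := List.sizeOf_lt_of_mem t.2
    simp only [Term.app.sizeOf_spec]
    omega

def Atom.holds (I : Interp) (ν : ℕ → I.dom) (a : Atom) : Prop :=
  I.pr a.pred (a.args.map (Term.eval I ν))

def Lit.holds (I : Interp) (ν : ℕ → I.dom) (L : Lit) : Prop :=
  if L.pos then L.atom.holds I ν else ¬ L.atom.holds I ν

/-- A clause holds under a valuation if one of its literals does. -/
def Clause.holdsUnder (I : Interp) (ν : ℕ → I.dom) (C : Clause) : Prop :=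
  ∃ L ∈ C, L.holds I ν

/-- A clause is true in an interpretation if its universal closure holds. -/
def Clause.trueIn (I : Interp) (C : Clause) : Prop := ∀ ν, Clause.holdsUnder I ν C

def Interp.models (I : Interp) (N : Set Clause) : Prop := ∀ C ∈ N, Clause.trueIn I C

/-- Satisfiability of a set of clauses. -/
def satisfiable (N : Set Clause) : Prop := ∃ I : Interp, I.models N

/-- Logical consequence:  every model of `N` is a model of `C`. -/
def entails (N : Set Clause) (C : Clause) : Prop :=
  ∀ I : Interp, I.models N → Clause.trueIn I C

/-- A tautology is a clause true in every interpretation. -/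
def Tautology (C : Clause) : Prop := ∀ (I : Interp) (ν : ℕ → I.dom), Clause.holdsUnder I ν C

/-- Two clauses are variants if each is an instance of the other. -/
def Variant (C D : Clause) : Prop :=
  (∃ σ : Subst, Clause.subst σ C = D) ∧ (∃ ρ : Subst, Clause.subst ρ D = C)

/-! ### Unification -/

def Unifies (σ : Subst) (a b : Atom) : Prop := a.subst σ = b.subst σ

/-- Most general unifiers. -/
def IsMGU (σ : Subst) (a b : Atom) : Prop :=
  Unifies σ a b ∧ ∀ θ : Subst, Unifies θ a b → ∃ ρ : Subst, ∀ x, (σ x).subst ρ = θ x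

def Lit.unifies (σ : Subst) (L1 L2 : Lit) : Prop := L1.subst σ = L2.subst σ

def Lit.isMGU (σ : Subst) (L1 L2 : Lit) : Prop :=
  Lit.unifies σ L1 L2 ∧ ∀ θ : Subst, Lit.unifies θ L1 L2 → ∃ ρ : Subst, ∀ x, (σ x).subst ρ = θ x

def UnifiesAll (σ : Subst) (ps : List (Atom × Atom)) : Prop :=
  ∀ p ∈ ps, Atom.subst σ p.1 = Atom.subst σ p.2

/-- Simultaneous most general unifiers. -/
def IsSimMGU (σ : Subst) (ps : List (Atom × Atom)) : Prop :=
  UnifiesAll σ ps ∧ ∀ θ : Subst, UnifiesAll θ ps → ∃ ρ : Subst, ∀ x, (σ x).subst ρ = θ x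

/-! ### Condensation, separability -/

/-- `D` is a subclause of `C` (as multisets). -/
def SubClause (D C : Clause) : Prop := (↑D : Multiset Lit) ≤ (↑C : Multiset Lit)

/-- `D` is a condensation of `C`: a proper subclause of `C` which is an instance of `C`
(up to duplicate literals). -/
def IsCondensation (D C : Clause) : Prop :=
  SubClause D C ∧ D.length < C.length ∧
    ∃ σ : Subst, ∀ L : Lit, L ∈ D ↔ L ∈ Clause.subst σ C

/-- A clause `C ∨ D` is separable into `C` and `D` if both are non-empty and neither
variable set is included in the other. -/
def Separable (C D : Clause) : Prop :=
  C ≠ [] ∧ D ≠ [] ∧ ¬ Clause.vars C ⊆ Clause.vars D ∧ ¬ Clause.vars D ⊆ Clause.vars C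

/-- A clause is indecomposable if it cannot be partitioned into two non-empty
variable-disjoint subclauses. -/
def Clause.indecomposable (C : Clause) : Prop :=
  ¬ ∃ D E : Clause, D ≠ [] ∧ E ≠ [] ∧
      (↑C : Multiset Lit) = (↑D : Multiset Lit) + (↑E : Multiset Lit) ∧
      Clause.vars D ∩ Clause.vars E = ∅

/-- The predicate symbols occurring in a clause set. -/
def SetPreds (N : Set Clause) : Set ℕ := {p | ∃ C ∈ N, p ∈ Clause.preds C}

/-! ### Orderings -/

namespace Head

def rank : Head → ℕ
  | .pr _ => 0
  | .cn _ => 1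
  | .fn _ => 2

def idx : Head → ℕ
  | .pr n => n
  | .cn n => n
  | .fn n => n

/-- The precedence: every function symbol is greater than every constant, and every
constant is greater than every predicate symbol. -/
def prec (g h : Head) : Prop := g.rank < h.rank ∨ (g.rank = h.rank ∧ g.idx < h.idx)

end Head

/-- The lexicographic path ordering on terms induced by the precedence `Head.prec`.
`LpoGT s t` means `s ≻_lpo t`. -/
inductive LpoGT : Term → Term → Prop
  | subRefl {h : Head} {ss : List Term} {t : Term} :
      t ∈ ss → LpoGT (.app h ss) t
  | sub {h : Head} {ss : List Term} {t : Term} (s : Term) :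
      s ∈ ss → LpoGT s t → LpoGT (.app h ss) t
  | prec {h g : Head} {ss ts : List Term} :
      Head.prec g h → (∀ t ∈ ts, LpoGT (.app h ss) t) → LpoGT (.app h ss) (.app g ts)
  | lex {h : Head} {ss ts u ss' ts' : List Term} {s t : Term} :
      ss = u ++ s :: ss' → ts = u ++ t :: ts' → LpoGT s t →
      (∀ t' ∈ ts, LpoGT (.app h ss) t') → LpoGT (.app h ss) (.app h ts)

/-- The induced lexicographic path ordering on literals, where a negative literal is
greater than the corresponding positive literal. -/
def Lit.lpoGT (L1 L2 : Lit) : Prop :=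
  LpoGT L1.atom.toTerm L2.atom.toTerm ∨
    (L1.atom.toTerm = L2.atom.toTerm ∧ L1.pos = false ∧ L2.pos = true)

/-- Admissible orderings on literals; `ord L L'` means `L ≻ L'`. -/
structure Admissible (ord : Lit → Lit → Prop) : Prop where
  trans : ∀ {a b c : Lit}, ord a b → ord b c → ord a c
  irrefl : ∀ a : Lit, ¬ ord a a
  totalGround : ∀ a b : Lit, a.ground → b.ground → a = b ∨ ord a b ∨ ord b a
  wfGround : WellFounded fun a b : Lit => a.ground ∧ b.ground ∧ ord b a
  liftable : ∀ (a b : Lit) (σ : Subst), ord a b → ord (a.subst σ) (b.subst σ)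
  negGtPos : ∀ a : Atom, a.ground → ord (Lit.mkNeg a) (Lit.mkPos a)
  negCompat : ∀ a b : Atom, a.ground → b.ground →
    ord (Lit.mkPos b) (Lit.mkPos a) → ord (Lit.mkPos b) (Lit.mkNeg a)

/-- The multiset extension of a literal ordering to clauses; `ClauseGT ord C D` means
`C ≻ D`. -/
def ClauseGT (ord : Lit → Lit → Prop) (C D : Clause) : Prop :=
  ∃ X Y Z : Multiset Lit,
    (↑C : Multiset Lit) = Z + X ∧ (↑D : Multiset Lit) = Z + Y ∧ X ≠ 0 ∧
      ∀ y ∈ Y, ∃ x ∈ X, ord x y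

/-- `L` is maximal with respect to a clause `C` (`C` not necessarily containing `L`):
some ground instance of `L` is not smaller than the corresponding instances of the
literals of `C`. -/
def maxIn (ord : Lit → Lit → Prop) (L : Lit) (C : Clause) : Prop :=
  ∃ σ : Subst, Lit.ground (L.subst σ) ∧ Clause.ground (Clause.subst σ C) ∧
    ∀ L' ∈ C, ¬ ord (Lit.subst σ L') (Lit.subst σ L)

/-- `L` is strictly maximal with respect to a clause `C`. -/
def strictMaxIn (ord : Lit → Lit → Prop) (L : Lit) (C : Clause) : Prop :=
  ∃ σ : Subst, Lit.ground (L.subst σ) ∧ Clause.ground (Clause.subst σ C) ∧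
    ∀ L' ∈ C, ord (Lit.subst σ L) (Lit.subst σ L')

/-! ### Redundancy -/

def GroundInstanceOf (D C : Clause) : Prop := (∃ σ : Subst, D = Clause.subst σ C) ∧ Clause.ground D

/-- Redundancy of a clause with respect to a clause set `N`:  every ground instance is
entailed by finitely many smaller ground instances of clauses of `N`. -/
def redundantClause (ord : Lit → Lit → Prop) (N : Set Clause) (C : Clause) : Prop :=
  ∀ D : Clause, GroundInstanceOf D C →
    ∃ S : Finset Clause, (∀ E ∈ S, ∃ C' ∈ N, GroundInstanceOf E C') ∧
      entails (↑S) D ∧ ∀ E ∈ S, ClauseGT ord D E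

/-- An inference is redundant in `N` if a premise is redundant, or its conclusion is
redundant in `N` or belongs to `N`. -/
def RedundantInference (ord : Lit → Lit → Prop) (N : Set Clause)
    (premises : List Clause) (concl : Clause) : Prop :=
  (∃ p ∈ premises, redundantClause ord N p) ∨ redundantClause ord N concl ∨ concl ∈ N

/-! ### Selection and eligibility -/

/-- Selection functions: select a set of negative literals of a clause. -/
def SelFn := Clause → Set Lit

def SelOK (sel : SelFn) : Prop := ∀ C : Clause, ∀ L ∈ sel C, L ∈ C ∧ L.pos = false

/-- A literal is eligible if it is selected, or nothing is selected and it is maximal. -/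
def Eligible (ord : Lit → Lit → Prop) (sel : SelFn) (C : Clause) (L : Lit) : Prop :=
  (sel C = ∅ ∧ L ∈ C ∧ maxIn ord L C) ∨ L ∈ sel C

/-- Eligibility under the refinement T-Refine (Algorithm 1), in the cases not depending
on side premises:  maximal literals for ground clauses and clauses with positive
compound terms, a selected negative compound-term literal, or a selected guard. -/
def EligibleTR (C : Clause) (L : Lit) : Prop :=
  L ∈ C ∧
    ((Clause.ground C ∧ maxIn Lit.lpoGT L C) ∨
     (¬ Clause.ground C ∧ Clause.hasNegCompound C ∧ L.pos = false ∧ L.hasCompound) ∨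
     (¬ Clause.ground C ∧ ¬ Clause.hasNegCompound C ∧ Clause.hasCompound C ∧
        maxIn Lit.lpoGT L C) ∨
     (¬ Clause.ground C ∧ ¬ Clause.hasCompound C ∧ L.isGuardOf C))

/-! ### Top-variable resolution -/

/-- `x` is a top variable of the negative atoms `A i` with respect to the candidate
unifier `σ'`:  the depth of `σ' x` is maximal. -/
def IsTopVar (n : ℕ) (A : Fin n → Atom) (σ' : Subst) (x : ℕ) : Prop :=
  (∃ i, x ∈ (A i).vars) ∧
    ∀ y : ℕ, (∃ i, y ∈ (A i).vars) → (σ' y).depth ≤ (σ' x).depth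

/-- The data of an application of the top-variable resolution rule TRes:
main premise `¬A₁ ∨ … ∨ ¬Aₙ ∨ D`,  side premises `Bᵢ ∨ Dᵢ`,
`σ'` a simultaneous mgu of all `n` pairs used to compute top variables, and
`σ` a simultaneous mgu of the first `m` (top-variable) pairs. -/
structure TResApp where
  n : ℕ
  m : ℕ
  A : Fin n → Atom
  B : Fin n → Atom
  Ds : Fin n → Clause
  D : Clause
  σ' : Subst
  σ : Subst

namespace TResApp

def mainPremise (t : TResApp) : Clause :=
  (List.ofFn fun i => Lit.mkNeg (t.A i)) ++ t.D

def sidePremise (t : TResApp) (i : Fin t.n) : Clause :=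
  Lit.mkPos (t.B i) :: t.Ds i

def sidePremises (t : TResApp) : List Clause := List.ofFn t.sidePremise

def resolvent (t : TResApp) : Clause :=
  Clause.subst t.σ
    ((((List.finRange t.n).filter fun i => i.1 < t.m).flatMap t.Ds) ++
     (((List.finRange t.n).filter fun i => t.m ≤ i.1).map fun i => Lit.mkNeg (t.A i)) ++
     t.D)

/-- Side conditions of the TRes rule. -/
def wf (ord : Lit → Lit → Prop) (t : TResApp) : Prop :=
  0 < t.m ∧ t.m ≤ t.n ∧
  (∀ L ∈ t.D, L.pos = true) ∧
  IsSimMGU t.σ' ((List.finRange t.n).map fun i => (t.A i, t.B i)) ∧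
  IsSimMGU t.σ (((List.finRange t.n).filter fun i => i.1 < t.m).map fun i => (t.A i, t.B i)) ∧
  (∀ i : Fin t.n, i.1 < t.m ↔ ∃ x, IsTopVar t.n t.A t.σ' x ∧ x ∈ (t.A i).vars) ∧
  (∀ i, strictMaxIn ord (Lit.mkPos (t.B i)) (t.Ds i)) ∧
  (∀ i, Clause.vars (t.sidePremise i) ∩ Clause.vars t.mainPremise = ∅) ∧
  (∀ i j, i ≠ j → Clause.vars (t.sidePremise i) ∩ Clause.vars (t.sidePremise j) = ∅)

end TResApp

/-! ### The generating inferences of T-Inf -/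

/-- The conclusion-generating inferences of the top-variable inference system T-Inf:
ordered resolution with selection (Res), ordered factoring (Fact), and top-variable
resolution (TRes). `TInfInf ord sel ps c` means `c` is the conclusion of an inference
with premises `ps`. -/
inductive TInfInf (ord : Lit → Lit → Prop) (sel : SelFn) : List Clause → Clause → Prop
  | res {B A : Atom} {D1 D : Clause} {σ : Subst} :
      IsMGU σ A B →
      sel (Lit.mkPos B :: D1) = ∅ →
      strictMaxIn ord (Lit.mkPos B) D1 →
      Eligible ord sel (Lit.mkNeg A :: D) (Lit.mkNeg A) →
      Clause.vars (Lit.mkPos B :: D1) ∩ Clause.vars (Lit.mkNeg A :: D) = ∅ →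
      TInfInf ord sel [Lit.mkPos B :: D1, Lit.mkNeg A :: D] (Clause.subst σ (D1 ++ D))
  | fact {A1 A2 : Atom} {C : Clause} {σ : Subst} :
      IsMGU σ A1 A2 →
      sel (C ++ [Lit.mkPos A1, Lit.mkPos A2]) = ∅ →
      maxIn ord (Lit.mkPos A1) (C ++ [Lit.mkPos A2]) →
      TInfInf ord sel [C ++ [Lit.mkPos A1, Lit.mkPos A2]] (Clause.subst σ (C ++ [Lit.mkPos A1]))
  | tres (t : TResApp) :
      t.wf ord →
      (∀ i, sel (t.sidePremise i) = ∅) →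
      (∀ i : Fin t.n, i.1 < t.m → Lit.mkNeg (t.A i) ∈ sel t.mainPremise) →
      TInfInf ord sel (t.sidePremises ++ [t.mainPremise]) t.resolvent

/-- `N` is saturated up to redundancy with respect to the inference system `inf`:
every inference from non-redundant premises of `N` is redundant in `N`. -/
def SaturatedUpToRedundancy (ord : Lit → Lit → Prop)
    (inf : List Clause → Clause → Prop) (N : Set Clause) : Prop :=
  ∀ (ps : List Clause) (c : Clause), inf ps c → (∀ p ∈ ps, p ∈ N) →
    RedundantInference ord N ps c


/-! ### Surface literals, chained and isolated variables of query clauses -/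

/-- `L` is a surface literal of `Q`: no other literal of `Q` has a strictly larger
variable set. -/
def SurfaceLit (Q : Clause) (L : Lit) : Prop :=
  L ∈ Q ∧ ∀ L' ∈ Q, ¬ (L.vars ⊂ L'.vars)

/-- `x` is a chained variable of `Q`: it occurs in two distinct surface literals with
different, mutually non-inclusive variable sets. -/
def ChainedVar (Q : Clause) (x : ℕ) : Prop :=
  ∃ L L' : Lit, SurfaceLit Q L ∧ SurfaceLit Q L' ∧ L ≠ L' ∧
    ¬ L.vars ⊆ L'.vars ∧ ¬ L'.vars ⊆ L.vars ∧ x ∈ L.vars ∧ x ∈ L'.vars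

/-- `x` is an isolated variable of `Q`: a variable of `Q` that is not chained. -/
def IsolatedVar (Q : Clause) (x : ℕ) : Prop := x ∈ Clause.vars Q ∧ ¬ ChainedVar Q x

/-- A query clause is isolated-only if all its variables are isolated. -/
def Clause.isolatedOnly (Q : Clause) : Prop := ∀ x ∈ Clause.vars Q, ¬ ChainedVar Q x

/-- A query clause is chained-only if all its variables are chained. -/
def Clause.chainedOnly (Q : Clause) : Prop := ∀ x ∈ Clause.vars Q, ChainedVar Q x

/-! ### The inferences of Q-AR -/

/-- The inferences of Q-AR: the T-Inf inferences together with the separation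
inferences (Sep) and the T-Trans renaming inferences, both introducing fresh,
smaller definer predicate symbols. -/
inductive QARInf (ord : Lit → Lit → Prop) (sel : SelFn) : List Clause → Clause → Prop
  | tinf {ps : List Clause} {c : Clause} : TInfInf ord sel ps c → QARInf ord sel ps c
  | sepL {C D : Clause} {ds : ℕ} {xs : List ℕ} :
      Separable C D → {x | x ∈ xs} = Clause.vars C ∩ Clause.vars D →
      ds ∉ Clause.preds (C ++ D) →
      QARInf ord sel [C ++ D] (Lit.mkNeg ⟨ds, xs.map Term.var⟩ :: C)
  | sepR {C D : Clause} {ds : ℕ} {xs : List ℕ} :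
      Separable C D → {x | x ∈ xs} = Clause.vars C ∩ Clause.vars D →
      ds ∉ Clause.preds (C ++ D) →
      QARInf ord sel [C ++ D] (Lit.mkPos ⟨ds, xs.map Term.var⟩ :: D)
  | ttransDef {E F : Clause} {d : ℕ} {xs : List ℕ} :
      {x | x ∈ xs} = Clause.vars E → d ∉ Clause.preds (F ++ E) →
      QARInf ord sel [F ++ E] (Lit.mkPos ⟨d, xs.map Term.var⟩ :: E)
  | ttransQ {E F : Clause} {d : ℕ} {xs : List ℕ} :
      {x | x ∈ xs} = Clause.vars E → d ∉ Clause.preds (F ++ E) →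
      QARInf ord sel [F ++ E] (F ++ [Lit.mkNeg ⟨d, xs.map Term.var⟩])

/-! ### Q-AR as a transition system on clause sets -/

/-- A single derivation step of the procedure Q-AR on clause sets: adding a
Res/TRes/Fact conclusion, replacement by a condensation, deletion of tautologies and
variants, separation (Sep) and the renaming T-Trans (both with fresh definer
predicate symbols). -/
inductive QARStep : Set Clause → Set Clause → Prop
  | res {N : Set Clause} {A B : Atom} {D1 D : Clause} {σ : Subst} :
      (Lit.mkPos B :: D1) ∈ N → (Lit.mkNeg A :: D) ∈ N → IsMGU σ A B →
      QARStep N (insert (Clause.subst σ (D1 ++ D)) N)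
  | tres {N : Set Clause} (t : TResApp) :
      (∀ i, t.sidePremise i ∈ N) → t.mainPremise ∈ N →
      (∀ i : Fin t.n, i.1 < t.m → Atom.subst t.σ (t.A i) = Atom.subst t.σ (t.B i)) →
      QARStep N (insert t.resolvent N)
  | fact {N : Set Clause} {A1 A2 : Atom} {C : Clause} {σ : Subst} :
      (C ++ [Lit.mkPos A1, Lit.mkPos A2]) ∈ N → IsMGU σ A1 A2 →
      QARStep N (insert (Clause.subst σ (C ++ [Lit.mkPos A1])) N)
  | conden {N : Set Clause} {C D : Clause} :
      C ∈ N → IsCondensation D C → QARStep N (insert D (N \ {C}))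
  | deleteTaut {N : Set Clause} {C : Clause} :
      C ∈ N → Tautology C → QARStep N (N \ {C})
  | deleteVariant {N : Set Clause} {C C' : Clause} :
      C ∈ N → C' ∈ N → C ≠ C' → Variant C C' → QARStep N (N \ {C})
  | sep {N : Set Clause} {C D : Clause} {ds : ℕ} {xs : List ℕ} :
      (C ++ D) ∈ N → Separable C D → {x | x ∈ xs} = Clause.vars C ∩ Clause.vars D →
      ds ∉ SetPreds N →
      QARStep N (insert (Lit.mkNeg ⟨ds, xs.map Term.var⟩ :: C)
        (insert (Lit.mkPos ⟨ds, xs.map Term.var⟩ :: D) (N \ {C ++ D})))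
  | ttrans {N : Set Clause} {E F : Clause} {d : ℕ} {xs : List ℕ} :
      (F ++ E) ∈ N → {x | x ∈ xs} = Clause.vars E → d ∉ SetPreds N →
      QARStep N (insert (F ++ [Lit.mkNeg ⟨d, xs.map Term.var⟩])
        (insert (Lit.mkPos ⟨d, xs.map Term.var⟩ :: E) (N \ {F ++ E})))

/-! Soundness is semantic. By the substitution lemma every instance of a true clause is
true, which disposes of Res, TRes, Fact, Conden and Delete. Split and Sep rest on one
observation: if `C ∨ D` is true and two valuations agree on the shared variables of `C`
and `D`, then `C` holds under the first or `D` under the second, since the two can be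
glued into one valuation. For Sep, a model of `C ∨ D` becomes a model of the separated
clauses by reading `d_s(x̄)` as "`C` holds under every valuation extending `x̄`". -/

@[elab_as_elim]
theorem Term.induction {P : Term → Prop} (var : ∀ x, P (.var x))
    (app : ∀ h ts, (∀ t ∈ ts, P t) → P (.app h ts)) : ∀ t, P t
  | .var x => var x
  | .app h ts => app h ts fun t _ => Term.induction var app t
  termination_by t => sizeOf t
  decreasing_by
    have := List.sizeOf_lt_of_mem ‹t ∈ ts›
    simp only [Term.app.sizeOf_spec]
    omega

section Semantics

variable (I : Interp)

@[simp]
theorem Term.eval_var (ν : ℕ → I.dom) (x : ℕ) : Term.eval I ν (.var x) = ν x := by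
  rw [Term.eval]

@[simp]
theorem Term.eval_app (ν : ℕ → I.dom) (h : Head) (ts : List Term) :
    Term.eval I ν (.app h ts) = I.fn h (ts.map (Term.eval I ν)) := by
  rw [Term.eval, List.attach_map_val]

@[simp]
theorem Term.subst_var (σ : Subst) (x : ℕ) : Term.subst σ (.var x) = σ x := by
  rw [Term.subst]

@[simp]
theorem Term.subst_app (σ : Subst) (h : Head) (ts : List Term) :
    Term.subst σ (.app h ts) = .app h (ts.map (Term.subst σ)) := by
  rw [Term.subst, List.attach_map_val]

theorem Term.eval_congr {ν ν' : ℕ → I.dom} (t : Term) (h : ∀ x ∈ t.vars, ν x = ν' x) :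
    t.eval I ν = t.eval I ν' := by
  induction t using Term.induction with
  | var x => simpa using h x (.var x)
  | app f ts ih =>
    rw [Term.eval_app, Term.eval_app]
    exact congrArg _ (List.map_congr_left fun t ht => ih t ht fun x hx => h x (.app ht hx))

theorem Term.eval_subst (ν : ℕ → I.dom) (σ : Subst) (t : Term) :
    (t.subst σ).eval I ν = t.eval I (fun x => (σ x).eval I ν) := by
  induction t using Term.induction with
  | var x => simp
  | app f ts ih =>
    rw [Term.subst_app, Term.eval_app, Term.eval_app, List.map_map]
    exact congrArg _ (List.map_congr_left ih)

theorem Lit.holds_congr_atom {J : Interp} {ν : ℕ → I.dom} {ν' : ℕ → J.dom} {b : Bool}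
    {a a' : Atom} (h : a.holds I ν ↔ a'.holds J ν') :
    Lit.holds I ν ⟨b, a⟩ ↔ Lit.holds J ν' ⟨b, a'⟩ := by
  unfold Lit.holds
  cases b <;> simp [h]

@[simp]
theorem Lit.holds_mkPos (ν : ℕ → I.dom) (a : Atom) :
    (Lit.mkPos a).holds I ν ↔ a.holds I ν := by simp [Lit.holds, Lit.mkPos]

@[simp]
theorem Lit.holds_mkNeg (ν : ℕ → I.dom) (a : Atom) :
    (Lit.mkNeg a).holds I ν ↔ ¬ a.holds I ν := by simp [Lit.holds, Lit.mkNeg]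

theorem Atom.holds_subst (ν : ℕ → I.dom) (σ : Subst) (a : Atom) :
    (a.subst σ).holds I ν ↔ a.holds I (fun x => (σ x).eval I ν) := by
  simp only [Atom.holds, Atom.subst, List.map_map, Function.comp_def, Term.eval_subst]

theorem Atom.holds_congr {ν ν' : ℕ → I.dom} (a : Atom) (h : ∀ x ∈ a.vars, ν x = ν' x) :
    a.holds I ν ↔ a.holds I ν' := by
  unfold Atom.holds
  rw [List.map_inj_left.2 fun t ht => Term.eval_congr I t fun x hx => h x ⟨t, ht, hx⟩]

@[simp]
theorem Clause.subst_cons (σ : Subst) (L : Lit) (C : Clause) :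
    Clause.subst σ (L :: C) = L.subst σ :: Clause.subst σ C := rfl

@[simp]
theorem Clause.subst_append (σ : Subst) (C D : Clause) :
    Clause.subst σ (C ++ D) = Clause.subst σ C ++ Clause.subst σ D := List.map_append

@[simp]
theorem Lit.subst_mkPos (σ : Subst) (a : Atom) : (Lit.mkPos a).subst σ = .mkPos (a.subst σ) :=
  rfl

@[simp]
theorem Lit.subst_mkNeg (σ : Subst) (a : Atom) : (Lit.mkNeg a).subst σ = .mkNeg (a.subst σ) :=
  rfl

@[simp]
theorem Clause.holdsUnder_cons (ν : ℕ → I.dom) (L : Lit) (C : Clause) :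
    Clause.holdsUnder I ν (L :: C) ↔ L.holds I ν ∨ Clause.holdsUnder I ν C := by
  simp [Clause.holdsUnder]

@[simp]
theorem Clause.holdsUnder_append (ν : ℕ → I.dom) (C D : Clause) :
    Clause.holdsUnder I ν (C ++ D) ↔ Clause.holdsUnder I ν C ∨ Clause.holdsUnder I ν D := by
  simp only [Clause.holdsUnder, List.mem_append, or_and_right, exists_or]

theorem Clause.holdsUnder_mono {ν : ℕ → I.dom} {C D : Clause} (hCD : C ⊆ D)
    (h : Clause.holdsUnder I ν C) : Clause.holdsUnder I ν D :=
  let ⟨L, hL, hh⟩ := h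
  ⟨L, hCD hL, hh⟩

theorem Clause.holdsUnder_subst (ν : ℕ → I.dom) (σ : Subst) (C : Clause) :
    Clause.holdsUnder I ν (Clause.subst σ C) ↔
      Clause.holdsUnder I (fun x => (σ x).eval I ν) C := by
  simp only [Clause.holdsUnder, Clause.subst, List.mem_map, exists_exists_and_eq_and]
  exact exists_congr fun L =>
    and_congr_right fun _ => Lit.holds_congr_atom I (Atom.holds_subst I ν σ L.atom)

theorem Clause.holdsUnder_congr {ν ν' : ℕ → I.dom} (C : Clause)
    (h : ∀ x ∈ Clause.vars C, ν x = ν' x) :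
    Clause.holdsUnder I ν C ↔ Clause.holdsUnder I ν' C :=
  exists_congr fun L => and_congr_right fun hL =>
    Lit.holds_congr_atom I (Atom.holds_congr I L.atom fun x hx => h x ⟨L, hL, hx⟩)

theorem Clause.trueIn_subst {C : Clause} (σ : Subst) (h : Clause.trueIn I C) :
    Clause.trueIn I (Clause.subst σ C) := fun ν =>
  (Clause.holdsUnder_subst I ν σ C).2 (h _)

theorem Clause.holdsUnder_resolve {ν : ℕ → I.dom} {a : Atom} {C D : Clause}
    (hpos : Clause.holdsUnder I ν (Lit.mkPos a :: C))
    (hneg : Clause.holdsUnder I ν (Lit.mkNeg a :: D)) : Clause.holdsUnder I ν (C ++ D) := by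
  simp only [Clause.holdsUnder_cons, Lit.holds_mkPos, Lit.holds_mkNeg] at hpos hneg
  rw [Clause.holdsUnder_append]
  tauto

theorem Interp.models_union_singleton {N : Set Clause} {C : Clause} :
    I.models (N ∪ {C}) ↔ I.models N ∧ Clause.trueIn I C := by
  simp [Interp.models, or_imp, forall_and, and_comm]

end Semantics

theorem Clause.holdsUnder_or_holdsUnder_of_trueIn_append {I : Interp} {C D : Clause}
    (h : Clause.trueIn I (C ++ D)) {μ ν : ℕ → I.dom}
    (hμν : ∀ x ∈ Clause.vars C ∩ Clause.vars D, μ x = ν x) :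
    Clause.holdsUnder I μ C ∨ Clause.holdsUnder I ν D := by
  classical
  let glued : ℕ → I.dom := fun x => if x ∈ Clause.vars C then μ x else ν x
  have hC : Clause.holdsUnder I glued C ↔ Clause.holdsUnder I μ C :=
    Clause.holdsUnder_congr I C fun x hx => if_pos hx
  have hD : Clause.holdsUnder I glued D ↔ Clause.holdsUnder I ν D :=
    Clause.holdsUnder_congr I D fun x hx => by
      by_cases hxC : x ∈ Clause.vars C
      · exact (if_pos hxC).trans (hμν x ⟨hxC, hx⟩)
      · exact if_neg hxC
  rw [← hC, ← hD, ← Clause.holdsUnder_append]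
  exact h glued

theorem Clause.trueIn_append_iff_of_disjoint {I : Interp} {C D : Clause}
    (hdis : Clause.vars C ∩ Clause.vars D = ∅) :
    Clause.trueIn I (C ++ D) ↔ Clause.trueIn I C ∨ Clause.trueIn I D := by
  refine ⟨fun h => ?_, fun h ν => ?_⟩
  · by_contra hne
    simp only [Clause.trueIn, not_or, not_forall] at hne
    obtain ⟨⟨μ, hμ⟩, ⟨ν, hν⟩⟩ := hne
    have := Clause.holdsUnder_or_holdsUnder_of_trueIn_append h (μ := μ) (ν := ν)
      (by simp [hdis])
    tauto
  · rw [Clause.holdsUnder_append]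
    exact h.imp (· ν) (· ν)

theorem TResApp.entails_resolvent (t : TResApp)
    (hσ : ∀ i : Fin t.n, i.1 < t.m → Atom.subst t.σ (t.A i) = Atom.subst t.σ (t.B i)) :
    entails ({C | C ∈ t.sidePremises} ∪ {t.mainPremise}) t.resolvent := by
  intro I hI ν
  set μ : ℕ → I.dom := fun x => (t.σ x).eval I ν
  have hside (i) : Clause.holdsUnder I μ (t.sidePremise i) :=
    hI _ (.inl (List.mem_ofFn.2 ⟨i, rfl⟩)) μ
  have hAB (i : Fin t.n) (hi : i.1 < t.m) : (t.A i).holds I μ ↔ (t.B i).holds I μ := by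
    rw [← Atom.holds_subst, ← Atom.holds_subst, hσ i hi]
  rw [TResApp.resolvent, Clause.holdsUnder_subst]
  obtain ⟨L, hL, hh⟩ := hI t.mainPremise (.inr rfl) μ
  rcases List.mem_append.1 hL with hL | hL
  · obtain ⟨i, rfl⟩ := List.mem_ofFn.1 hL
    by_cases him : i.1 < t.m
    · obtain hB | ⟨K, hK, hKh⟩ := (Clause.holdsUnder_cons I μ _ _).1 (hside i)
      · exact absurd ((hAB i him).2 ((Lit.holds_mkPos I μ _).1 hB))
          ((Lit.holds_mkNeg I μ _).1 hh)
      refine ⟨K, List.mem_append_left _ (List.mem_append_left _ ?_), hKh⟩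
      exact List.mem_flatMap.2
        ⟨i, List.mem_filter.2 ⟨List.mem_finRange i, by simpa using him⟩, hK⟩
    · refine ⟨_, List.mem_append_left _ (List.mem_append_right _ ?_), hh⟩
      simpa using ⟨i, not_lt.1 him, rfl⟩
  · exact ⟨L, List.mem_append_right _ hL, hh⟩

theorem entails_resolvent {A B : Atom} {D1 D : Clause} {σ : Subst} (h : Unifies σ A B) :
    entails {Lit.mkPos B :: D1, Lit.mkNeg A :: D} (Clause.subst σ (D1 ++ D)) := by
  intro I hI ν
  have hpos := Clause.trueIn_subst I σ (hI _ (.inl rfl)) ν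
  have hneg := Clause.trueIn_subst I σ (hI _ (.inr rfl)) ν
  rw [Clause.subst_cons, Lit.subst_mkPos] at hpos
  rw [Clause.subst_cons, Lit.subst_mkNeg, h] at hneg
  rw [Clause.subst_append]
  exact Clause.holdsUnder_resolve I hpos hneg

theorem entails_factor {A1 A2 : Atom} {C : Clause} {σ : Subst} (h : Unifies σ A1 A2) :
    entails {C ++ [Lit.mkPos A1, Lit.mkPos A2]} (Clause.subst σ (C ++ [Lit.mkPos A1])) := by
  intro I hI ν
  refine Clause.holdsUnder_mono I ?_ (Clause.trueIn_subst I σ (hI _ rfl) ν)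
  simp [show A2.subst σ = A1.subst σ from h.symm]

theorem entails_of_isCondensation {C D : Clause} (h : IsCondensation D C) : entails {C} D := by
  obtain ⟨-, -, σ, hσ⟩ := h
  intro I hI ν
  exact Clause.holdsUnder_mono I (fun L hL => (hσ L).2 hL) (Clause.trueIn_subst I σ (hI C rfl) ν)

theorem entails_of_subClause {C D : Clause} (h : SubClause D C) : entails {D} C :=
  fun I hI ν => Clause.holdsUnder_mono I (fun _ hL => Multiset.mem_of_le h hL) (hI D rfl ν)

theorem satisfiable_union_of_entails {N : Set Clause} {C : Clause} (h : entails N C) :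
    satisfiable (N ∪ {C}) ↔ satisfiable N := by
  simp only [satisfiable, Interp.models_union_singleton]
  exact exists_congr fun I => and_iff_left_of_imp (h I)

theorem entails_of_variant {N : Set Clause} {C C' : Clause} (hC' : C' ∈ N)
    (h : Variant C C') : entails N C := by
  obtain ⟨-, ρ, rfl⟩ := h
  exact fun I hI => Clause.trueIn_subst I ρ (hI C' hC')

theorem satisfiable_split_iff {N : Set Clause} {C D : Clause}
    (hdis : Clause.vars C ∩ Clause.vars D = ∅) :
    satisfiable (N ∪ {C ++ D}) ↔ satisfiable (N ∪ {C}) ∨ satisfiable (N ∪ {D}) := by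
  simp only [satisfiable, Interp.models_union_singleton,
    Clause.trueIn_append_iff_of_disjoint hdis, and_or_left, exists_or]

abbrev Interp.withPred (I : Interp) (p : ℕ) (P : List I.dom → Prop) : Interp :=
  { I with pr := Function.update I.pr p P }

section WithPred

variable (I : Interp) (p : ℕ) (P : List I.dom → Prop)

theorem Term.eval_withPred (ν : ℕ → I.dom) (t : Term) :
    Term.eval (I.withPred p P) ν t = Term.eval I ν t := by
  induction t using Term.induction with
  | var x => exact (Term.eval_var (I.withPred p P) ν x).trans (Term.eval_var I ν x).symm
  | app f ts ih =>
    refine (Term.eval_app (I.withPred p P) ν f ts).trans ?_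
    rw [Term.eval_app]
    exact congrArg (I.fn f) (List.map_congr_left ih)

theorem Atom.holds_withPred (ν : ℕ → I.dom) (a : Atom) :
    a.holds (I.withPred p P) ν ↔
      Function.update I.pr p P a.pred (a.args.map (Term.eval I ν)) := by
  unfold Atom.holds
  rw [List.map_congr_left fun t _ => Term.eval_withPred I p P ν t]

theorem Atom.holds_withPred_vars (ν : ℕ → I.dom) (xs : List ℕ) :
    Atom.holds (I.withPred p P) ν ⟨p, xs.map Term.var⟩ ↔ P (xs.map ν) := by
  simp [Atom.holds_withPred, Function.comp_def]

theorem Clause.holdsUnder_withPred {C : Clause} (hp : p ∉ Clause.preds C) (ν : ℕ → I.dom) :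
    Clause.holdsUnder (I.withPred p P) ν C ↔ Clause.holdsUnder I ν C :=
  exists_congr fun L => and_congr_right fun hL => Lit.holds_congr_atom (I.withPred p P) <| by
    rw [Atom.holds_withPred, Function.update_of_ne fun h => hp ⟨L, hL, h⟩]
    rfl

end WithPred

theorem Interp.models_union_pair {I : Interp} {N : Set Clause} {C D : Clause} :
    I.models (N ∪ {C, D}) ↔ I.models N ∧ Clause.trueIn I C ∧ Clause.trueIn I D := by
  simp only [Interp.models, Set.mem_union, Set.mem_insert_iff, Set.mem_singleton_iff, or_imp,
    forall_and, forall_eq]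

section Separation

variable {N : Set Clause} {C D : Clause} {ds : ℕ} {xs : List ℕ}

theorem Interp.models_separate {I : Interp}
    (hxs : {x | x ∈ xs} = Clause.vars C ∩ Clause.vars D)
    (hds : ds ∉ SetPreds N ∪ Clause.preds (C ++ D)) (hI : I.models (N ∪ {C ++ D})) :
    (I.withPred ds fun args => ∀ μ, xs.map μ = args → Clause.holdsUnder I μ C).models
      (N ∪ {Lit.mkNeg ⟨ds, xs.map Term.var⟩ :: C,
            Lit.mkPos ⟨ds, xs.map Term.var⟩ :: D}) := by
  obtain ⟨hN, hCD⟩ := Interp.models_union_singleton I |>.1 hI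
  have hdsC : ds ∉ Clause.preds C := fun ⟨L, hL, h⟩ =>
    hds (.inr ⟨L, List.mem_append_left _ hL, h⟩)
  have hdsD : ds ∉ Clause.preds D := fun ⟨L, hL, h⟩ =>
    hds (.inr ⟨L, List.mem_append_right _ hL, h⟩)
  refine Interp.models_union_pair.2 ⟨fun E hE ν => ?_, fun ν => ?_, fun ν => ?_⟩
  · exact (Clause.holdsUnder_withPred I ds _ (fun h => hds (.inl ⟨E, hE, h⟩)) ν).2
      (hN E hE ν)
  · rw [Clause.holdsUnder_cons, Lit.holds_mkNeg, Atom.holds_withPred_vars,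
      Clause.holdsUnder_withPred I ds _ hdsC]
    exact or_iff_not_imp_left.2 fun hd => not_not.1 hd ν rfl
  · rw [Clause.holdsUnder_cons, Lit.holds_mkPos, Atom.holds_withPred_vars,
      Clause.holdsUnder_withPred I ds _ hdsD]
    refine or_iff_not_imp_left.2 fun hd => ?_
    simp only [not_forall] at hd
    obtain ⟨μ, hμν, hμ⟩ := hd
    refine (Clause.holdsUnder_or_holdsUnder_of_trueIn_append hCD fun x hx => ?_).resolve_left hμ
    exact List.map_eq_map_iff.1 hμν x (hxs ▸ hx : x ∈ {x | x ∈ xs})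

theorem satisfiable_separate_iff (hxs : {x | x ∈ xs} = Clause.vars C ∩ Clause.vars D)
    (hds : ds ∉ SetPreds N ∪ Clause.preds (C ++ D)) :
    satisfiable (N ∪ {C ++ D}) ↔
      satisfiable (N ∪ {Lit.mkNeg ⟨ds, xs.map Term.var⟩ :: C,
                        Lit.mkPos ⟨ds, xs.map Term.var⟩ :: D}) := by
  refine ⟨fun ⟨I, hI⟩ => ⟨_, Interp.models_separate hxs hds hI⟩,
    fun ⟨I, hI⟩ => ⟨I, ?_⟩⟩
  obtain ⟨hN, hneg, hpos⟩ := Interp.models_union_pair.1 hI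
  refine (Interp.models_union_singleton I).2 ⟨hN, fun ν => ?_⟩
  rw [Clause.holdsUnder_append, or_comm, ← Clause.holdsUnder_append]
  exact Clause.holdsUnder_resolve I (hpos ν) (hneg ν)

end Separation

/-- The top-variable inference system T-Inf is sound:  every application
of its rules preserves satisfiability.  The conclusions of Res, TRes, Fact and Conden
are logical consequences of their premises;  Delete removes only tautologies or
variants;  Split and Sep preserve satisfiability as stated. -/
theorem tinf_sound :
    -- Res: the resolvent is a logical consequence of its premises
    (∀ (A B : Atom) (D1 D : Clause) (σ : Subst), IsMGU σ A B →
        entails {Lit.mkPos B :: D1, Lit.mkNeg A :: D} (Clause.subst σ (D1 ++ D))) ∧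
    -- TRes: the resolvent is a logical consequence of its premises
    (∀ t : TResApp,
        (∀ i : Fin t.n, i.1 < t.m → Atom.subst t.σ (t.A i) = Atom.subst t.σ (t.B i)) →
        entails ({C | C ∈ t.sidePremises} ∪ {t.mainPremise}) t.resolvent) ∧
    -- Fact: the factor is a logical consequence of its premise
    (∀ (A1 A2 : Atom) (C : Clause) (σ : Subst), IsMGU σ A1 A2 →
        entails {C ++ [Lit.mkPos A1, Lit.mkPos A2]}
          (Clause.subst σ (C ++ [Lit.mkPos A1]))) ∧
    -- Conden: the condensation is a logical consequence of its premise (and conversely)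
    (∀ C D : Clause, IsCondensation D C → entails {C} D ∧ entails {D} C) ∧
    -- Delete: removing a tautology preserves satisfiability
    (∀ (N : Set Clause) (C : Clause), Tautology C →
        (satisfiable (N ∪ {C}) ↔ satisfiable N)) ∧
    -- Delete: removing a variant of a clause of N preserves satisfiability
    (∀ (N : Set Clause) (C C' : Clause), C' ∈ N → Variant C C' →
        (satisfiable (N ∪ {C}) ↔ satisfiable N)) ∧
    -- Split: N ∪ {C ∨ D} with C, D non-empty and variable-disjoint is satisfiable iff
    -- N ∪ {C} or N ∪ {D} is satisfiable
    (∀ (N : Set Clause) (C D : Clause), C ≠ [] → D ≠ [] →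
        Clause.vars C ∩ Clause.vars D = ∅ →
        (satisfiable (N ∪ {C ++ D}) ↔ (satisfiable (N ∪ {C}) ∨ satisfiable (N ∪ {D})))) ∧
    -- Sep: separation replaces a clause set by an equisatisfiable one
    (∀ (N : Set Clause) (C D : Clause) (ds : ℕ) (xs : List ℕ), Separable C D →
        {x | x ∈ xs} = Clause.vars C ∩ Clause.vars D →
        ds ∉ SetPreds N ∪ Clause.preds (C ++ D) →
        (satisfiable (N ∪ {C ++ D}) ↔
          satisfiable (N ∪ {Lit.mkNeg ⟨ds, xs.map Term.var⟩ :: C,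
                            Lit.mkPos ⟨ds, xs.map Term.var⟩ :: D}))) := by
  refine ⟨fun _ _ _ _ _ h => entails_resolvent h.1, TResApp.entails_resolvent,
    fun _ _ _ _ h => entails_factor h.1,
    fun _ _ h => ⟨entails_of_isCondensation h, entails_of_subClause h.1⟩,
    fun _ _ h => satisfiable_union_of_entails fun I _ ν => h I ν,
    fun _ _ _ hC' h => satisfiable_union_of_entails (entails_of_variant hC' h),
    fun _ _ _ _ _ hdis => satisfiable_split_iff hdis,
    fun _ _ _ _ _ _ hxs hds => satisfiable_separate_iff hxs hds⟩

end QGF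
end

section
/- Under the refinement T-Refine, if ℒ is the set of eligible literals of a guarded clause or a loosely guarded clause C, then the variables occurring in ℒ are exactly the variables of C, i.e., Var(ℒ) = Var(C). -/
/-!
Common formalization of first-order clausal logic (without equality), following
"Resolution-based query answering and rewriting for the (loosely) guarded fragment".
-/

set_option linter.unusedVariables false

namespace QGF

/-- `x` is a top variable of the clause `C` with respect to the candidate unifier
`σ'`:  among the variables of the negative literals of `C`, the depth of `σ' x` is
maximal. -/
def TopVarOfClause (C : Clause) (σ' : Subst) (x : ℕ) : Prop :=
  (∃ L ∈ C, L.pos = false ∧ x ∈ L.vars) ∧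
    ∀ y : ℕ, (∃ L ∈ C, L.pos = false ∧ y ∈ L.vars) → (σ' y).depth ≤ (σ' x).depth

/-- The possible sets of eligible literals of a clause under the refinement T-Refine
(Algorithm 1):  the ≻_lpo-maximal literals if the clause is ground;  a selected
negative compound-term literal if one exists;  the maximal literals if the clause has
positive compound terms;  a selected guard for flat guarded clauses;  and for flat
loosely guarded clauses the top-variable literals with respect to a candidate unifier
with side premises, or all negative literals if no side premises exist. -/
inductive EligSet : Clause → Set Lit → Prop
  | ground {C : Clause} : Clause.ground C →
      EligSet C {L | L ∈ C ∧ maxIn Lit.lpoGT L C}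
  | negCompound {C : Clause} {L : Lit} : ¬ Clause.ground C → L ∈ C → L.pos = false →
      L.hasCompound → EligSet C {L}
  | posCompound {C : Clause} : ¬ Clause.ground C → ¬ Clause.hasNegCompound C →
      Clause.hasCompound C → EligSet C {L | L ∈ C ∧ maxIn Lit.lpoGT L C}
  | guard {C : Clause} {L : Lit} : ¬ Clause.ground C → ¬ Clause.hasCompound C →
      L.isGuardOf C → EligSet C {L}
  | top {C : Clause} (σ' : Subst) : ¬ Clause.ground C → ¬ Clause.hasCompound C →
      EligSet C {L | L ∈ C ∧ L.pos = false ∧ ∃ x, TopVarOfClause C σ' x ∧ x ∈ L.vars}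
  | allNeg {C : Clause} : ¬ Clause.ground C → ¬ Clause.hasCompound C →
      EligSet C {L | L ∈ C ∧ L.pos = false}


/-!
A literal with a compound term carries all variables of `C` by covering, and a guard does
by definition. The (loose) guards put any two variables, in particular a top variable and
an arbitrary one, into a common negative literal, which settles top-variable and
all-negative selection. For maximal selection, each variable `x` lies in a maximal literal:
instantiate `x` by a function constant above every function symbol of `C` and the other
variables by a constant. Since function symbols sit on top of the precedence, `≻_lpo` never
introduces a larger function symbol, so no literal lacking `x` dominates one containing it,
and a literal maximal among those containing `x` is maximal in `C`.
-/

namespace Term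

theorem subst_app_s11 (σ : Subst) (h : Head) (ts : List Term) :
    subst σ (app h ts) = app h (ts.map (subst σ)) := by
  rw [subst, List.attach_map_val]

theorem sizeOf_lt_of_mem {t : Term} {ts : List Term} (h : t ∈ ts) (hd : Head) :
    sizeOf t < sizeOf (app hd ts) := by
  have := List.sizeOf_lt_of_mem h
  simp only [app.sizeOf_spec]
  omega

namespace SubtermOf

theorem of_mem {t : Term} {ts : List Term} (h : t ∈ ts) (hd : Head) :
    SubtermOf t (Term.app hd ts) :=
  app h (refl t)

theorem trans {a b c : Term} (hab : SubtermOf a b) (hbc : SubtermOf b c) : SubtermOf a c := by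
  induction hbc with
  | refl => exact hab
  | app mem _ ih => exact app mem ih

theorem sizeOf_le {s t : Term} (h : SubtermOf s t) : sizeOf s ≤ sizeOf t := by
  induction h with
  | refl => exact le_rfl
  | @app h ts t mem _ ih => exact ih.trans (sizeOf_lt_of_mem mem h).le

end SubtermOf

theorem hasVar_iff_subtermOf_var {t : Term} {x : ℕ} : HasVar t x ↔ SubtermOf (var x) t := by
  constructor
  · intro h
    induction h with
    | var => exact .refl _
    | app mem _ ih => exact .app mem ih
  · intro h
    generalize hv : var x = v at h
    induction h with
    | refl => exact hv ▸ .var x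
    | app mem _ ih => exact .app mem ih

theorem HasVar.of_subtermOf {t u : Term} {x : ℕ} (hsub : SubtermOf t u) (h : HasVar t x) :
    HasVar u x :=
  hasVar_iff_subtermOf_var.mpr ((hasVar_iff_subtermOf_var.mp h).trans hsub)

theorem subtermOf_subst_of_hasVar (σ : Subst) {t : Term} {v : ℕ} (h : HasVar t v) :
    SubtermOf (σ v) (subst σ t) := by
  induction h with
  | var x => rw [subst]; exact .refl _
  | @app hd _ _ t' mem _ ih =>
    rw [subst_app_s11]
    exact .app (List.mem_map_of_mem mem) ih

theorem SubtermOf.of_subst {s : Term} (σ : Subst) {t : Term} (h : SubtermOf s (subst σ t)) :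
    (∃ u, SubtermOf u t ∧ s = subst σ u) ∨ ∃ v, HasVar t v ∧ SubtermOf s (σ v) := by
  generalize hw : subst σ t = w at h
  induction h generalizing t with
  | refl => exact .inl ⟨t, .refl t, hw.symm⟩
  | @app hd ws m mem hsub ih =>
    cases t with
    | var v =>
      rw [subst] at hw
      exact .inr ⟨v, .var v, hw ▸ .app mem hsub⟩
    | app h' ts =>
      rw [subst_app_s11] at hw
      injection hw with _ hargs
      subst hargs
      obtain ⟨t₀, ht₀, rfl⟩ := List.mem_map.mp mem
      rcases ih rfl with ⟨u, hu, he⟩ | ⟨v, hv, hs⟩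
      · exact .inl ⟨u, .app ht₀ hu, he⟩
      · exact .inr ⟨v, .app ht₀ hv, hs⟩

theorem HasVar.exists_of_subst {σ : Subst} {t : Term} {x : ℕ} (h : HasVar (subst σ t) x) :
    ∃ v, HasVar t v ∧ HasVar (σ v) x := by
  rcases (hasVar_iff_subtermOf_var.mp h).of_subst σ with ⟨u, hu, he⟩ | ⟨v, hv, hs⟩
  · cases u with
    | var v =>
      rw [subst] at he
      exact ⟨v, hasVar_iff_subtermOf_var.mpr hu, he ▸ .var x⟩
    | app _ _ => rw [subst_app_s11] at he; cases he
  · exact ⟨v, hv, hasVar_iff_subtermOf_var.mpr hs⟩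

theorem vars_finite : ∀ t : Term, t.vars.Finite
  | var x => (Set.finite_singleton x).subset fun _ hy => by cases hy; rfl
  | app h ts => (ts.finite_toSet.biUnion fun t _ => vars_finite t).subset fun _ hy => by
      cases hy with
      | app ht hy => exact Set.mem_biUnion ht hy
  decreasing_by exact sizeOf_lt_of_mem ‹_› h

end Term

namespace Head

theorem prec_trans {a b c : Head} (hab : prec a b) (hbc : prec b c) : prec a c := by
  unfold prec at *
  omega

theorem prec_irrefl (a : Head) : ¬ prec a a := by
  unfold prec
  omega

theorem exists_eq_fn_of_fn_prec {n : ℕ} {h : Head} (hp : prec (.fn n) h) :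
    ∃ m, h = .fn m ∧ n < m := by
  cases h <;> simp only [prec, rank, idx] at hp <;> first
    | omega
    | exact ⟨_, rfl, by omega⟩

end Head

theorem _root_.List.append_cons_eq_append_cons {α : Type} {a b a' b' : List α} {x y : α}
    (h : a ++ x :: a' = b ++ y :: b') :
    (a = b ∧ x = y ∧ a' = b') ∨ (∃ m, b = a ++ x :: m) ∨ ∃ m, a = b ++ y :: m := by
  rcases List.append_eq_append_iff.mp h with ⟨_ | ⟨z, m⟩, rfl, he⟩ | ⟨_ | ⟨z, m⟩, rfl, he⟩
  · simp_all
  · simp only [List.cons_append, List.cons.injEq] at he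
    exact .inr (.inl ⟨m, by rw [he.1]⟩)
  · simp_all
  · simp only [List.cons_append, List.cons.injEq] at he
    exact .inr (.inr ⟨m, by rw [he.1]⟩)

namespace LpoGT

theorem not_subtermOf {s t : Term} (h : LpoGT s t) : ¬ Term.SubtermOf s t := by
  induction h with
  | @subRefl h ss t mem =>
    intro hsub
    have := hsub.sizeOf_le
    have := Term.sizeOf_lt_of_mem mem h
    omega
  | @sub h ss t s mem _ ih => exact fun hsub => ih ((Term.SubtermOf.of_mem mem h).trans hsub)
  | prec hp _ ih =>
    rintro (_ | ⟨mem, hsub⟩)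
    · exact Head.prec_irrefl _ hp
    · exact ih _ mem hsub
  | lex e1 e2 _ _ ih0 ih =>
    rintro (_ | ⟨mem, hsub⟩)
    · rw [e1] at e2
      injection List.append_inj_right e2 rfl with h1
      exact ih0 (h1 ▸ .refl _)
    · exact ih _ mem hsub

theorem irrefl (t : Term) : ¬ LpoGT t t := fun h => h.not_subtermOf (.refl t)

theorem lex_trans {h : Head} {ss ts us w w' ss' ts' ts'' us' : List Term} {s t t₁ u : Term}
    (htrans : ∀ a ∈ ss, ∀ b ∈ ts, ∀ c ∈ us, LpoGT a b → LpoGT b c → LpoGT a c)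
    (e1 : ss = w ++ s :: ss') (e2 : ts = w ++ t :: ts') (hst : LpoGT s t)
    (e3 : ts = w' ++ t₁ :: ts'') (e4 : us = w' ++ u :: us') (htu : LpoGT t₁ u)
    (hside : ∀ u' ∈ us, LpoGT (.app h ss) u') :
    LpoGT (.app h ss) (.app h us) := by
  rw [e2] at e3
  rcases List.append_cons_eq_append_cons e3 with ⟨rfl, rfl, -⟩ | ⟨m, rfl⟩ | ⟨m, rfl⟩
  · exact lex e1 e4 (htrans s (by simp [e1]) t (by simp [e2]) u (by simp [e4]) hst htu) hside
  · exact lex e1 (ts' := m ++ u :: us') (by rw [e4]; simp) hst hside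
  · exact lex (ss' := m ++ s :: ss') (by rw [e1]; simp) e4 htu hside

theorem trans_of_sizeOf_le (n : ℕ) : ∀ s t u : Term, sizeOf s + sizeOf t + sizeOf u ≤ n →
    LpoGT s t → LpoGT t u → LpoGT s u := by
  induction n using Nat.strong_induction_on with
  | _ n IH =>
  intro s t u hsz hst htu
  have IH' : ∀ a b c : Term, sizeOf a + sizeOf b + sizeOf c < n →
      LpoGT a b → LpoGT b c → LpoGT a c := fun a b c h => IH _ h a b c le_rfl
  have hside : ∀ {f : Head} {us : List Term}, u = .app f us →
      (∀ u' ∈ us, LpoGT t u') → ∀ u' ∈ us, LpoGT s u' := by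
    rintro f us rfl hall u' hu'
    have := Term.sizeOf_lt_of_mem hu' f
    exact IH' _ _ _ (by omega) hst (hall u' hu')
  cases hst with
  | subRefl mem => exact .sub _ mem htu
  | @sub h ss _ s' mem hlt =>
    have := Term.sizeOf_lt_of_mem mem h
    exact .sub s' mem (IH' _ _ _ (by omega) hlt htu)
  | @prec h g ss ts hp hall =>
    cases htu with
    | subRefl mem => exact hall _ mem
    | sub t' mem hlt =>
      have := Term.sizeOf_lt_of_mem mem g
      exact IH' _ _ _ (by omega) (hall _ mem) hlt
    | prec hp' hall' => exact .prec (Head.prec_trans hp' hp) (hside rfl hall')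
    | lex _ _ _ hall' => exact .prec hp (hside rfl hall')
  | @lex h ss ts _ _ _ _ _ e1 e2 h0 hall =>
    cases htu with
    | subRefl mem => exact hall _ mem
    | sub t' mem hlt =>
      have := Term.sizeOf_lt_of_mem mem h
      exact IH' _ _ _ (by omega) (hall _ mem) hlt
    | prec hp' hall' => exact .prec hp' (hside rfl hall')
    | @lex _ _ us _ _ _ _ _ e3 e4 h1 hall' =>
      refine lex_trans (fun a ha b hb c hc => IH' a b c ?_) e1 e2 h0 e3 e4 h1 (hside rfl hall')
      have := Term.sizeOf_lt_of_mem ha h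
      have := Term.sizeOf_lt_of_mem hb h
      have := Term.sizeOf_lt_of_mem hc h
      omega

theorem trans {s t u : Term} (hst : LpoGT s t) (htu : LpoGT t u) : LpoGT s u :=
  trans_of_sizeOf_le _ s t u le_rfl hst htu

end LpoGT

namespace Lit

theorem lpoGT_trans {a b c : Lit} (hab : lpoGT a b) (hbc : lpoGT b c) : lpoGT a c := by
  rcases hab with hab | ⟨e1, -, p1⟩ <;> rcases hbc with hbc | ⟨e2, p2, -⟩
  · exact .inl (hab.trans hbc)
  · exact .inl (e2 ▸ hab)
  · exact .inl (e1 ▸ hbc)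
  · simp_all

theorem lpoGT_irrefl (a : Lit) : ¬ lpoGT a a := by
  rintro (h | ⟨-, p1, p2⟩)
  · exact LpoGT.irrefl _ h
  · simp_all

theorem mem_vars_iff_hasVar_toTerm {L : Lit} {x : ℕ} : x ∈ L.vars ↔ L.atom.toTerm.HasVar x :=
  ⟨fun ⟨_, ht, hx⟩ => .app ht hx, fun | .app ht hx => ⟨_, ht, hx⟩⟩

theorem toTerm_subst (σ : Subst) (L : Lit) :
    (L.subst σ).atom.toTerm = L.atom.toTerm.subst σ := by
  rw [subst, Atom.subst, Atom.toTerm, Atom.toTerm, Term.subst_app_s11]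

theorem ground_subst {σ : Subst} (hσ : ∀ v, (σ v).isGround) (L : Lit) : (L.subst σ).ground := by
  refine Set.eq_empty_of_forall_notMem fun x hx => ?_
  obtain ⟨v, -, hv⟩ := (toTerm_subst σ L ▸ mem_vars_iff_hasVar_toTerm.mp hx).exists_of_subst
  exact (hσ v).subset hv

end Lit

theorem Clause.ground_subst {σ : Subst} (hσ : ∀ v, (σ v).isGround) (C : Clause) :
    (C.subst σ).ground := by
  refine Set.eq_empty_of_forall_notMem fun x ⟨L, hL, hx⟩ => ?_
  obtain ⟨L₀, -, rfl⟩ := List.mem_map.mp hL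
  exact (Lit.ground_subst hσ L₀).subset hx

namespace Term

def FnIdxLt (k : ℕ) (t : Term) : Prop :=
  ∀ n ts, SubtermOf (app (.fn n) ts) t → n < k

theorem fnIdxLt_sizeOf (t : Term) : FnIdxLt (sizeOf t) t := by
  intro n ts h
  have := h.sizeOf_le
  have : sizeOf (app (.fn n) ts) = 1 + (1 + n) + sizeOf ts := by simp
  omega

theorem FnIdxLt.mono {k k' : ℕ} (h : k ≤ k') {t : Term} (ht : FnIdxLt k t) : FnIdxLt k' t :=
  fun n ts hs => (ht n ts hs).trans_le h

theorem FnIdxLt.of_subtermOf {k : ℕ} {s t : Term} (hsub : SubtermOf s t) (ht : FnIdxLt k t) :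
    FnIdxLt k s :=
  fun n ts hs => ht n ts (hs.trans hsub)

theorem FnIdxLt.subst {k : ℕ} {σ : Subst} {t : Term} (ht : FnIdxLt k t)
    (hσ : ∀ v, t.HasVar v → FnIdxLt k (σ v)) : FnIdxLt k (t.subst σ) := by
  intro n ts hsub
  rcases hsub.of_subst σ with ⟨u, hu, he⟩ | ⟨v, hv, hs⟩
  · cases u with
    | var v =>
      rw [Term.subst] at he
      exact hσ v (hasVar_iff_subtermOf_var.mpr hu) n ts (he ▸ .refl _)
    | app h us =>
      rw [subst_app_s11] at he
      injection he with hh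
      exact ht n us (hh ▸ hu)
  · exact hσ v hv n ts hs

end Term

theorem LpoGT.fnIdxLt {k : ℕ} {s t : Term} (h : LpoGT s t) (hs : s.FnIdxLt k) : t.FnIdxLt k := by
  induction h with
  | subRefl mem => exact hs.of_subtermOf (.of_mem mem _)
  | sub _ mem _ ih => exact ih (hs.of_subtermOf (.of_mem mem _))
  | @prec h g ss ts hp _ ih =>
    rintro n us (_ | ⟨mem, hsub⟩)
    · obtain ⟨m, rfl, hnm⟩ := Head.exists_eq_fn_of_fn_prec hp
      exact hnm.trans (hs m ss (.refl _))
    · exact ih _ mem hs n us hsub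
  | @lex h ss _ _ _ _ _ _ _ _ _ _ _ ih =>
    rintro n us (_ | ⟨mem, hsub⟩)
    · exact hs n ss (.refl _)
    · exact ih _ mem hs n us hsub

theorem Lit.not_lpoGT_of_fnIdxLt {k : ℕ} {L L' : Lit} {ts : List Term}
    (hL : Term.SubtermOf (.app (.fn k) ts) L.atom.toTerm) (hL' : L'.atom.toTerm.FnIdxLt k) :
    ¬ L'.lpoGT L := by
  rintro (h | ⟨he, -⟩)
  · exact (h.fnIdxLt hL' k ts hL).false
  · exact (hL' k ts (he ▸ hL)).false

theorem Clause.exists_maxIn_lpoGT_of_mem_vars {C : Clause} {x : ℕ} (hx : x ∈ C.vars) :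
    ∃ L ∈ C, maxIn Lit.lpoGT L C ∧ x ∈ L.vars := by
  set K := (C.map fun L => sizeOf L.atom.toTerm).sum
  let σ : Subst := fun v => if v = x then .app (.fn K) [] else .app (.cn 0) []
  have hσ : ∀ v, (σ v).isGround := by
    intro v
    refine Set.eq_empty_of_forall_notMem fun y hy => ?_
    dsimp only [σ] at hy
    split at hy <;> cases hy with | app mem _ => cases mem
  let r : Lit → Lit → Prop := fun a b => Lit.lpoGT (a.subst σ) (b.subst σ)
  have : IsStrictOrder Lit r :=
    { trans := fun _ _ _ => Lit.lpoGT_trans, irrefl := fun _ => Lit.lpoGT_irrefl _ }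
  obtain ⟨L₀, hL₀, hx₀⟩ := hx
  have hfin : {L | L ∈ C ∧ x ∈ L.vars}.Finite := C.finite_toSet.subset fun _ h => h.1
  obtain ⟨⟨L, hL, hxL⟩, -, hmax⟩ :=
    (hfin.wellFoundedOn (r := r)).has_min Set.univ ⟨⟨L₀, hL₀, hx₀⟩, trivial⟩
  refine ⟨L, hL, ⟨σ, Lit.ground_subst hσ L, Clause.ground_subst hσ C, fun L' hL' hgt => ?_⟩, hxL⟩
  by_cases hx' : x ∈ L'.vars
  · exact hmax ⟨L', hL', hx'⟩ trivial hgt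
  refine Lit.not_lpoGT_of_fnIdxLt (k := K) (ts := []) ?_ ?_ hgt
  · rw [Lit.toTerm_subst]
    simpa [σ] using Term.subtermOf_subst_of_hasVar σ (Lit.mem_vars_iff_hasVar_toTerm.mp hxL)
  · rw [Lit.toTerm_subst]
    refine ((Term.fnIdxLt_sizeOf _).mono ?_).subst fun v hv => ?_
    · exact List.le_sum_of_mem (List.mem_map_of_mem hL')
    · have hvx : v ≠ x := fun h => hx' (Lit.mem_vars_iff_hasVar_toTerm.mpr (h ▸ hv))
      rw [show σ v = .app (.cn 0) [] from if_neg hvx]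
      rintro n ts (_ | ⟨⟨⟩, -⟩)

theorem Lit.vars_finite (L : Lit) : L.vars.Finite :=
  (L.atom.args.finite_toSet.biUnion fun t _ => t.vars_finite).subset
    fun _ ⟨t, ht, hx⟩ => Set.mem_biUnion ht hx

namespace Clause

def negVars (C : Clause) : Set ℕ := {y | ∃ L ∈ C, L.pos = false ∧ y ∈ L.vars}

theorem negVars_finite (C : Clause) : C.negVars.Finite :=
  (C.finite_toSet.biUnion fun L _ => L.vars_finite).subset
    fun _ ⟨L, hL, _, hy⟩ => Set.mem_biUnion hL hy

theorem exists_topVarOfClause {C : Clause} (σ' : Subst) (h : C.negVars.Nonempty) :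
    ∃ x, TopVarOfClause C σ' x :=
  let ⟨x, hx, hmax⟩ := C.negVars.exists_max_image (fun y => (σ' y).depth) C.negVars_finite h
  ⟨x, hx, hmax⟩

/-- `x = y` is allowed, so every variable of `C` occurs in a negative literal. -/
def NegPairCovered (C : Clause) : Prop :=
  ∀ x ∈ C.vars, ∀ y ∈ C.vars, ∃ L ∈ C, L.pos = false ∧ x ∈ L.vars ∧ y ∈ L.vars

theorem negPairCovered_of_isGuardOf {C : Clause} {G : Lit} (hG : G.isGuardOf C) :
    C.NegPairCovered := by
  obtain ⟨hGC, hneg, -, hvars⟩ := hG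
  exact fun x hx y hy => ⟨G, hGC, hneg, hvars ▸ hx, hvars ▸ hy⟩

theorem negPairCovered_of_looseGuardsOf {C : Clause} {G : List Lit} (hG : looseGuardsOf G C) :
    C.NegPairCovered := by
  obtain ⟨hGC, hcover, hpair⟩ := hG
  intro x hx y hy
  obtain ⟨L, hLG, hxL, hyL⟩ : ∃ L ∈ G, x ∈ L.vars ∧ y ∈ L.vars := by
    rcases eq_or_ne x y with rfl | hxy
    · obtain ⟨L, hLG, hxL⟩ := hcover x hx
      exact ⟨L, hLG, hxL, hxL⟩
    · exact hpair x hx y hy hxy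
  exact ⟨L, (hGC L hLG).1, (hGC L hLG).2.1, hxL, hyL⟩

theorem negPairCovered {C : Clause} (hC : C.guarded ∨ C.looselyGuarded) (hng : ¬ C.ground) :
    C.NegPairCovered := by
  rcases hC with ⟨-, -, hg | ⟨G, hG⟩⟩ | ⟨-, -, hg | ⟨G, hG⟩⟩
  · exact absurd hg hng
  · exact negPairCovered_of_isGuardOf hG
  · exact absurd hg hng
  · exact negPairCovered_of_looseGuardsOf hG

theorem NegPairCovered.exists_topVar_lit {C : Clause} (hC : C.NegPairCovered) (σ' : Subst)
    {y : ℕ} (hy : y ∈ C.vars) :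
    ∃ L ∈ C, L.pos = false ∧ (∃ x, TopVarOfClause C σ' x ∧ x ∈ L.vars) ∧ y ∈ L.vars := by
  obtain ⟨L₀, hL₀, hneg₀, hy₀, -⟩ := hC y hy y hy
  obtain ⟨x, hxtop⟩ := exists_topVarOfClause σ' ⟨y, L₀, hL₀, hneg₀, hy₀⟩
  obtain ⟨L₁, hL₁, -, hx₁⟩ := hxtop.1
  obtain ⟨L, hL, hneg, hxL, hyL⟩ := hC x ⟨L₁, hL₁, hx₁⟩ y hy
  exact ⟨L, hL, hneg, ⟨x, hxtop, hxL⟩, hyL⟩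

theorem vars_eq_of_hasCompound {C : Clause} {L : Lit} (hcov : C.covering) (hL : L ∈ C)
    (hc : L.hasCompound) : L.vars = C.vars := by
  obtain ⟨t, ⟨u, hu, hsub⟩, hcomp⟩ := hc
  refine Set.Subset.antisymm (fun x hx => ⟨L, hL, hx⟩) fun x hx => ?_
  rw [← hcov t ⟨L, hL, u, hu, hsub⟩ hcomp] at hx
  exact ⟨u, hu, Term.HasVar.of_subtermOf hsub hx⟩

theorem covering_of_guarded_or_looselyGuarded {C : Clause}
    (hC : C.guarded ∨ C.looselyGuarded) : C.covering := by
  rcases hC with ⟨-, h, -⟩ | ⟨-, h, -⟩ <;> exact h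

end Clause

theorem EligSet.subset {C : Clause} {S : Set Lit} (hS : EligSet C S) : ∀ L ∈ S, L ∈ C := by
  cases hS with
  | negCompound _ hL => exact fun _ h => h ▸ hL
  | guard _ _ hG => exact fun _ h => h ▸ hG.1
  | _ => exact fun _ h => h.1

theorem vars_eq_of_subset_of_cover {C : Clause} {S : Set Lit} (hSC : ∀ L ∈ S, L ∈ C)
    (hCS : ∀ x ∈ C.vars, ∃ L ∈ S, x ∈ L.vars) : {x | ∃ L ∈ S, x ∈ L.vars} = C.vars :=
  Set.Subset.antisymm (fun _ ⟨L, hL, hx⟩ => ⟨L, hSC L hL, hx⟩) hCS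

/-- Lemma C.1:  Under T-Refine, if `ℒ` is the set of eligible literals
of a guarded or loosely guarded clause `C`, then `Var(ℒ) = Var(C)`. -/
theorem eligible_literals_vars (C : Clause)
    (hC : Clause.guarded C ∨ Clause.looselyGuarded C)
    (S : Set Lit) (hS : EligSet C S) :
    {x | ∃ L ∈ S, x ∈ L.vars} = Clause.vars C := by
  refine vars_eq_of_subset_of_cover hS.subset fun x hx => ?_
  cases hS with
  | ground hg => exact absurd hx (Set.eq_empty_iff_forall_notMem.mp hg x)
  | negCompound _ hL _ hc =>
    exact ⟨_, rfl, Clause.vars_eq_of_hasCompound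
      (Clause.covering_of_guarded_or_looselyGuarded hC) hL hc ▸ hx⟩
  | posCompound =>
    obtain ⟨L, hL, hmax, hxL⟩ := Clause.exists_maxIn_lpoGT_of_mem_vars hx
    exact ⟨L, ⟨hL, hmax⟩, hxL⟩
  | guard _ _ hG => exact ⟨_, rfl, hG.2.2.2 ▸ hx⟩
  | top σ' hng =>
    obtain ⟨L, hL, hneg, htop, hxL⟩ := (Clause.negPairCovered hC hng).exists_topVar_lit σ' hx
    exact ⟨L, ⟨hL, hneg, htop⟩, hxL⟩
  | allNeg hng =>
    obtain ⟨L, hL, hneg, hxL, -⟩ := Clause.negPairCovered hC hng x hx x hx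
    exact ⟨L, ⟨hL, hneg⟩, hxL⟩
end QGF
end
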